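/- Let δ ∈ (0,1) and let G_δ' (s) = 1/max{s,δ}. Then for all real symmetric d×d matrices φ and ψ, −(φ − ψ) : (G_δ'(φ) − G_δ'(ψ)) ≥ δ² ‖G_δ'(φ) − G_δ'(ψ)‖², where matrix functions are defined spectrally, A:B is the Frobenius inner product and ‖·‖ the Frobenius norm. -/
import Mathlib

open Matrix BigOperators

/-- Frobenius inner product of two square real matrices. -/
noncomputable def frobInner {n : ℕ} (A B : Matrix (Fin n) (Fin n) ℝ) : ℝ :=
  ∑ i, ∑ j, A i j * B i j

/-- Spectral application of a scalar function: given a decomposition `φ = Oᵀ D O`,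
`specApply g O D = Oᵀ g(D) O`. -/
noncomputable def specApply {n : ℕ} (g : ℝ → ℝ) (O : Matrix (Fin n) (Fin n) ℝ)
    (D : Fin n → ℝ) : Matrix (Fin n) (Fin n) ℝ :=
  Oᵀ * Matrix.diagonal (fun i => g (D i)) * O

/-- The regularized logarithm `G_δ`. -/
noncomputable def Gdelta (δ : ℝ) (s : ℝ) : ℝ :=
  if δ ≤ s then Real.log s else s / δ + Real.log δ - 1

/-- The derivative of the regularized logarithm, `G_δ'(s) = 1 / max{s, δ}`. -/
noncomputable def Gdelta' (δ : ℝ) (s : ℝ) : ℝ := (max s δ)⁻¹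

/-- The scalar cut-off `β_δ(s) = max{s, δ}`. -/
noncomputable def betaDelta (δ : ℝ) (s : ℝ) : ℝ := max s δ

lemma scalar_key (δ s t : ℝ) (hδ : 0 < δ) :
    δ^2 * (Gdelta' δ s - Gdelta' δ t)^2 ≤ -((s - t) * (Gdelta' δ s - Gdelta' δ t)) := by
  unfold Gdelta'
  set u := max s δ with hu
  set v := max t δ with hv
  have hud : δ ≤ u := le_max_right _ _
  have hvd : δ ≤ v := le_max_right _ _
  have hu0 : 0 < u := lt_of_lt_of_le hδ hud
  have hv0 : 0 < v := lt_of_lt_of_le hδ hvd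
  have hlip : |u - v| ≤ |s - t| := abs_max_sub_max_le_abs s t δ
  have hsign : 0 ≤ (u - v) * (s - t) := by
    rcases le_total s t with h | h
    · have : u ≤ v := max_le_max h le_rfl
      nlinarith
    · have : v ≤ u := max_le_max h le_rfl
      nlinarith
  have h1 : (u - v)^2 ≤ (u - v) * (s - t) := by
    have h2 : (u - v) * (s - t) = |u - v| * |s - t| := by
      rw [← abs_mul]; exact (abs_of_nonneg hsign).symm
    nlinarith [abs_nonneg (u - v), sq_abs (u - v),
      mul_le_mul_of_nonneg_left hlip (abs_nonneg (u - v))]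
  have hδuv : δ^2 ≤ u * v := by nlinarith
  have huv : 0 < u * v := mul_pos hu0 hv0
  have e : u⁻¹ - v⁻¹ = (v - u) / (u * v) := by field_simp
  rw [e]
  have e2 : -((s - t) * ((v - u) / (u * v))) = ((u - v) * (s - t)) / (u * v) := by
    field_simp; ring
  rw [e2, div_pow, ← mul_div_assoc, div_le_div_iff₀ (by positivity) huv]
  nlinarith [mul_le_mul_of_nonneg_right h1 huv.le,
    mul_le_mul_of_nonneg_right hδuv (sq_nonneg (v - u)), sq_nonneg (v - u)]

lemma frob_eq_trace {n : ℕ} (A B : Matrix (Fin n) (Fin n) ℝ) :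
    frobInner A B = Matrix.trace (A * Bᵀ) := by
  simp only [frobInner, Matrix.trace, Matrix.diag, Matrix.mul_apply, Matrix.transpose_apply]

lemma frob_comm {n : ℕ} (A B : Matrix (Fin n) (Fin n) ℝ) :
    frobInner A B = frobInner B A := by
  simp only [frobInner]
  exact Finset.sum_congr rfl fun i _ => Finset.sum_congr rfl fun j _ => mul_comm _ _

lemma frob_sub_sub {n : ℕ} (X Y Z W : Matrix (Fin n) (Fin n) ℝ) :
    frobInner (X - Y) (Z - W)
      = frobInner X Z - frobInner X W - frobInner Y Z + frobInner Y W := by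
  simp only [frobInner, Matrix.sub_apply, sub_mul, mul_sub, Finset.sum_sub_distrib]
  ring

lemma frob_mixed {n : ℕ} (O P : Matrix (Fin n) (Fin n) ℝ) (hO : Oᵀ * O = 1)
    (f g : Fin n → ℝ) :
    frobInner (Oᵀ * Matrix.diagonal f * O) (Pᵀ * Matrix.diagonal g * P)
      = ∑ k, ∑ l, f k * g l * ((O * Pᵀ) k l)^2 := by
  have hO' : O * Oᵀ = 1 := mul_eq_one_comm.mp hO
  rw [frob_eq_trace]
  have hsym : (Pᵀ * Matrix.diagonal g * P)ᵀ = Pᵀ * Matrix.diagonal g * P := by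
    simp [Matrix.transpose_mul, Matrix.mul_assoc]
  rw [hsym]
  have key : Oᵀ * Matrix.diagonal f * O * (Pᵀ * Matrix.diagonal g * P)
      = Oᵀ * (Matrix.diagonal f * (O * Pᵀ) * Matrix.diagonal g * (O * Pᵀ)ᵀ) * O := by
    simp only [Matrix.transpose_mul, Matrix.transpose_transpose, Matrix.mul_assoc]
    rw [show P * (Oᵀ * O) = P by rw [hO, Matrix.mul_one]]
  rw [key, Matrix.trace_mul_cycle, ← Matrix.mul_assoc, hO', Matrix.one_mul]
  set M := O * Pᵀ with hM
  rw [Matrix.trace]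
  simp only [Matrix.diag]
  refine Finset.sum_congr rfl fun k _ => ?_
  rw [Matrix.mul_apply]
  refine Finset.sum_congr rfl fun l _ => ?_
  rw [Matrix.mul_diagonal, Matrix.diagonal_mul, Matrix.transpose_apply]
  ring

lemma frob_same {n : ℕ} (O : Matrix (Fin n) (Fin n) ℝ) (hO : Oᵀ * O = 1)
    (f g : Fin n → ℝ) :
    frobInner (Oᵀ * Matrix.diagonal f * O) (Oᵀ * Matrix.diagonal g * O)
      = ∑ k, f k * g k := by
  rw [frob_mixed O O hO f g, mul_eq_one_comm.mp hO]
  refine Finset.sum_congr rfl fun k _ => ?_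
  rw [Finset.sum_eq_single k]
  · simp [Matrix.one_apply]
  · intro l _ hl
    simp [Matrix.one_apply, Ne.symm hl]
  · simp

theorem stmt7 {d : ℕ} (δ : ℝ) (hδ0 : 0 < δ) (hδ1 : δ < 1)
    (φ ψ Oφ Oψ : Matrix (Fin d) (Fin d) ℝ) (Dφ Dψ : Fin d → ℝ)
    (hφ : φ.IsSymm) (hψ : ψ.IsSymm)
    (hOφ : Oφᵀ * Oφ = 1) (hOψ : Oψᵀ * Oψ = 1)
    (hdecφ : φ = Oφᵀ * Matrix.diagonal Dφ * Oφ)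
    (hdecψ : ψ = Oψᵀ * Matrix.diagonal Dψ * Oψ) :
    δ ^ 2 * frobInner (specApply (Gdelta' δ) Oφ Dφ - specApply (Gdelta' δ) Oψ Dψ)
        (specApply (Gdelta' δ) Oφ Dφ - specApply (Gdelta' δ) Oψ Dψ) ≤
      -frobInner (φ - ψ) (specApply (Gdelta' δ) Oφ Dφ - specApply (Gdelta' δ) Oψ Dψ) := by
  set a : Fin d → ℝ := fun k => Gdelta' δ (Dφ k) with ha
  set b : Fin d → ℝ := fun l => Gdelta' δ (Dψ l) with hb
  set M : Matrix (Fin d) (Fin d) ℝ := Oφ * Oψᵀ with hMdef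
  set W : Fin d → Fin d → ℝ := fun k l => (M k l)^2 with hW
  have hMMt : M * Mᵀ = 1 := by
    rw [hMdef, Matrix.transpose_mul, Matrix.transpose_transpose]
    calc Oφ * Oψᵀ * (Oψ * Oφᵀ) = Oφ * (Oψᵀ * Oψ) * Oφᵀ := by
          simp only [Matrix.mul_assoc]
      _ = 1 := by rw [hOψ, Matrix.mul_one]; exact mul_eq_one_comm.mp hOφ
  have hMtM : Mᵀ * M = 1 := mul_eq_one_comm.mp hMMt
  have hrow : ∀ k, ∑ l, W k l = 1 := by
    intro k
    have := congrArg (fun X : Matrix (Fin d) (Fin d) ℝ => X k k) hMMt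
    simpa [hW, Matrix.mul_apply, Matrix.one_apply, pow_two] using this
  have hcol : ∀ l, ∑ k, W k l = 1 := by
    intro l
    have := congrArg (fun X : Matrix (Fin d) (Fin d) ℝ => X l l) hMtM
    simpa [hW, Matrix.mul_apply, Matrix.one_apply, pow_two] using this
  -- the four mixed frobenius products
  have hAB : frobInner (specApply (Gdelta' δ) Oφ Dφ) (specApply (Gdelta' δ) Oψ Dψ)
      = ∑ k, ∑ l, a k * b l * W k l := frob_mixed Oφ Oψ hOφ a b
  have hφB : frobInner φ (specApply (Gdelta' δ) Oψ Dψ)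
      = ∑ k, ∑ l, Dφ k * b l * W k l := by
    rw [hdecφ]; exact frob_mixed Oφ Oψ hOφ Dφ b
  have hψA : frobInner ψ (specApply (Gdelta' δ) Oφ Dφ)
      = ∑ k, ∑ l, a k * Dψ l * W k l := by
    rw [hdecψ, frob_comm]; exact frob_mixed Oφ Oψ hOφ a Dψ
  have hAA : frobInner (specApply (Gdelta' δ) Oφ Dφ) (specApply (Gdelta' δ) Oφ Dφ)
      = ∑ k, a k * a k := frob_same Oφ hOφ a a
  have hBB : frobInner (specApply (Gdelta' δ) Oψ Dψ) (specApply (Gdelta' δ) Oψ Dψ)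
      = ∑ l, b l * b l := frob_same Oψ hOψ b b
  have hφA : frobInner φ (specApply (Gdelta' δ) Oφ Dφ) = ∑ k, Dφ k * a k := by
    rw [hdecφ]; exact frob_same Oφ hOφ Dφ a
  have hψB : frobInner ψ (specApply (Gdelta' δ) Oψ Dψ) = ∑ l, Dψ l * b l := by
    rw [hdecψ]; exact frob_same Oψ hOψ Dψ b
  have hBA : frobInner (specApply (Gdelta' δ) Oψ Dψ) (specApply (Gdelta' δ) Oφ Dφ)
      = ∑ k, ∑ l, a k * b l * W k l := by rw [frob_comm]; exact hAB
  -- expand single sums into double sums with weights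
  have expand1 : ∀ c : Fin d → ℝ, ∑ k, c k = ∑ k, ∑ l, c k * W k l := by
    intro c
    refine Finset.sum_congr rfl fun k _ => ?_
    rw [← Finset.mul_sum, hrow k, mul_one]
  have expand2 : ∀ c : Fin d → ℝ, ∑ l, c l = ∑ k, ∑ l, c l * W k l := by
    intro c
    rw [Finset.sum_comm]
    refine Finset.sum_congr rfl fun l _ => ?_
    rw [← Finset.mul_sum, hcol l, mul_one]
  have L : δ ^ 2 * frobInner (specApply (Gdelta' δ) Oφ Dφ - specApply (Gdelta' δ) Oψ Dψ)
        (specApply (Gdelta' δ) Oφ Dφ - specApply (Gdelta' δ) Oψ Dψ)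
      = ∑ k, ∑ l, δ ^ 2 * (a k - b l) ^ 2 * W k l := by
    rw [frob_sub_sub, hAA, hAB, hBA, hBB,
      expand1 (fun k => a k * a k), expand2 (fun l => b l * b l)]
    simp only [← Finset.sum_sub_distrib, ← Finset.sum_add_distrib, Finset.mul_sum]
    refine Finset.sum_congr rfl fun k _ => Finset.sum_congr rfl fun l _ => by ring
  have R : -frobInner (φ - ψ) (specApply (Gdelta' δ) Oφ Dφ - specApply (Gdelta' δ) Oψ Dψ)
      = ∑ k, ∑ l, (-((Dφ k - Dψ l) * (a k - b l))) * W k l := by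
    rw [frob_sub_sub, hφA, hφB, hψA, hψB,
      expand1 (fun k => Dφ k * a k), expand2 (fun l => Dψ l * b l)]
    simp only [← Finset.sum_sub_distrib, ← Finset.sum_add_distrib, neg_add, neg_sub,
      ← Finset.sum_neg_distrib]
    refine Finset.sum_congr rfl fun k _ => Finset.sum_congr rfl fun l _ => by ring
  rw [L, R]
  refine Finset.sum_le_sum fun k _ => Finset.sum_le_sum fun l _ => ?_
  have hkey := scalar_key δ (Dφ k) (Dψ l) hδ0
  exact mul_le_mul_of_nonneg_right hkey (sq_nonneg (M k l))
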